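/- Let p : ℕ → ℕ be admissible, let α : ℕ → ℕ satisfy α(n) = O(n), and for each n ≥ 2 let t_n be an α(n)-almost supermagic edge labeling of K_n. Then 1 ≤ liminf_{n→∞} R(p(n), t_n, n)/(p(n)·n) and limsup_{n→∞} R(p(n), t_n, n)/(p(n)·n) ≤ 2. -/

import Mathlib

open Finset

namespace Swap

noncomputable section
open scoped Classical

def eps (n : ℕ) : ℕ := n * (n - 1) / 2

def incEdges (n : ℕ) (v : Fin n) : Finset (Sym2 (Fin n)) :=
  Finset.univ.filter fun e => v ∈ e ∧ ¬ e.IsDiag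

def IsEdgeLabeling (n : ℕ) (t : Sym2 (Fin n) → ℕ) : Prop :=
  Set.BijOn t {e : Sym2 (Fin n) | ¬ e.IsDiag} (Set.Icc 1 (eps n))

def labelSum (n : ℕ) (t : Sym2 (Fin n) → ℕ) (v : Fin n) : ℤ :=
  ∑ e ∈ incEdges n v, (t e : ℤ)

def labelSet (n : ℕ) (t : Sym2 (Fin n) → ℕ) (v : Fin n) : Finset ℕ :=
  (incEdges n v).image t

def AlmostSupermagic (n α : ℕ) (t : Sym2 (Fin n) → ℕ) : Prop :=
  IsEdgeLabeling n t ∧ ∀ u v : Fin n, |labelSum n t u - labelSum n t v| ≤ (α : ℤ)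

def IsPSwap (n p : ℕ) (t t' : Sym2 (Fin n) → ℕ) : Prop :=
  IsEdgeLabeling n t' ∧ ∀ e : Sym2 (Fin n), ¬ e.IsDiag → |(t' e : ℤ) - (t e : ℤ)| ≤ (p : ℤ)

def robustness (n p : ℕ) (t : Sym2 (Fin n) → ℕ) : ℕ :=
  sSup {d : ℕ | ∃ t' : Sym2 (Fin n) → ℕ, IsPSwap n p t t' ∧
    ∃ u v : Fin n, u ≠ v ∧ (d : ℤ) = |labelSum n t' u - labelSum n t' v|}

def Uplus (n p : ℕ) (t : Sym2 (Fin n) → ℕ) (v : Fin n) : Finset (Sym2 (Fin n)) :=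
  (incEdges n v).filter fun e => ∃ e' ∈ incEdges n v, t e' = t e + p

def Uminus (n p : ℕ) (t : Sym2 (Fin n) → ℕ) (v : Fin n) : Finset (Sym2 (Fin n)) :=
  (incEdges n v).filter fun e => ∃ e' ∈ incEdges n v, t e' + p = t e

def badPairsI (n p : ℕ) (t : Sym2 (Fin n) → ℕ) (u v : Fin n) :
    Finset (Sym2 (Sym2 (Fin n))) :=
  Finset.univ.filter fun P => ∃ e₁ e₂ : Sym2 (Fin n), P = s(e₁, e₂) ∧
    ¬ e₁.IsDiag ∧ ¬ e₂.IsDiag ∧ u ∈ e₁ ∧ v ∈ e₂ ∧ ((t e₁ : ℤ) - (t e₂ : ℤ)).natAbs = p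

def badPairsII (n p : ℕ) (t : Sym2 (Fin n) → ℕ) (u v : Fin n) :
    Finset (Sym2 (Sym2 (Fin n))) :=
  Finset.univ.filter fun P => ∃ e₁ e₂ : Sym2 (Fin n), P = s(e₁, e₂) ∧
    ¬ e₁.IsDiag ∧ ¬ e₂.IsDiag ∧ u ∈ e₁ ∧ v ∈ e₂ ∧ ((t e₁ : ℤ) - (t e₂ : ℤ)).natAbs = 2 * p

def badPairs (n p : ℕ) (t : Sym2 (Fin n) → ℕ) (u v : Fin n) :
    Finset (Sym2 (Sym2 (Fin n))) :=
  badPairsI n p t u v ∪ badPairsII n p t u v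

def IsAP1 (I : Finset ℕ) : Prop := ∃ a b : ℕ, a ≤ b ∧ I = Finset.Icc a b

def SetHasType (p m ℓ : ℕ) (S : Finset ℕ) : Prop :=
  ∃ 𝒜 : Finset (Finset ℕ), 𝒜.card ≤ m ∧
    (∀ I ∈ 𝒜, IsAP1 I ∧ I ⊆ S ∧ 2 * p ≤ I.card) ∧
    (𝒜 : Set (Finset ℕ)).PairwiseDisjoint id ∧
    ℓ ≤ ∑ I ∈ 𝒜, I.card

def LabelingHasType (n p m ℓ : ℕ) (t : Sym2 (Fin n) → ℕ) : Prop :=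
  ∀ v : Fin n, SetHasType p m ℓ (labelSet n t v)

def AstrayGood (n b : ℕ) (t : Sym2 (Fin n) → ℕ) : Prop :=
  IsEdgeLabeling n t ∧
  ∃ A : Finset (Sym2 (Fin n)), (∀ e ∈ A, ¬ e.IsDiag) ∧
    A.card % 2 = eps n % 2 ∧
    A.image t = Finset.Icc ((eps n - A.card) / 2 + 1) ((eps n + A.card) / 2) ∧
    ∀ v : Fin n,
      (incEdges n v ∩ A).card ≤ b ∧
      ((incEdges n v).filter fun e => t e ≤ (eps n - A.card) / 2).card
        = ((incEdges n v).filter fun e => (eps n + A.card) / 2 < t e).card ∧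
      2 * ∑ e ∈ incEdges n v \ A, t e = (incEdges n v \ A).card * (eps n + 1)

def Admissible (p : ℕ → ℕ) : Prop :=
  Filter.Tendsto (fun n => (p n : ℝ) / n) Filter.atTop (nhds 0) ∧
  Filter.Tendsto p Filter.atTop Filter.atTop

end
end Swap

section Aux
open Swap Finset
open scoped Classical

variable {n : ℕ} {t : Sym2 (Fin n) → ℕ}

lemma mem_incEdges {v : Fin n} {e : Sym2 (Fin n)} :
    e ∈ incEdges n v ↔ v ∈ e ∧ ¬ e.IsDiag := by
  simp [incEdges]

lemma incEdges_eq (v : Fin n) :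
    incEdges n v = (Finset.univ.filter (fun w => w ≠ v)).image (fun w => s(v, w)) := by
  ext e
  simp only [mem_incEdges, Finset.mem_image, Finset.mem_filter, Finset.mem_univ, true_and]
  constructor
  · rintro ⟨hv, hd⟩
    induction e using Sym2.ind with
    | _ a b =>
      rcases Sym2.mem_iff.1 hv with rfl | rfl
      · exact ⟨b, fun h => hd (by simp [h, Sym2.isDiag_iff_proj_eq]), rfl⟩
      · exact ⟨a, fun h => hd (by simp [h, Sym2.isDiag_iff_proj_eq]), Sym2.eq_swap⟩
  · rintro ⟨w, hw, rfl⟩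
    refine ⟨by simp, ?_⟩
    simp [Sym2.isDiag_iff_proj_eq]
    exact fun h => hw h.symm

lemma card_incEdges (v : Fin n) : (incEdges n v).card = n - 1 := by
  rw [incEdges_eq]
  rw [Finset.card_image_of_injOn]
  · rw [Finset.filter_ne', Finset.card_erase_of_mem (Finset.mem_univ v)]
    simp
  · intro a _ b _ h
    exact (Sym2.congr_right).1 h

lemma labelSet_eq (v : Fin n) : labelSet n t v = (incEdges n v).image t := rfl

lemma mem_labelSet {v : Fin n} {k : ℕ} :
    k ∈ labelSet n t v ↔ ∃ e ∈ incEdges n v, t e = k := by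
  simp [labelSet]

lemma labelSet_subset (hL : IsEdgeLabeling n t) (v : Fin n) :
    labelSet n t v ⊆ Finset.Icc 1 (eps n) := by
  intro k hk
  rcases mem_labelSet.1 hk with ⟨e, he, rfl⟩
  have hd := (mem_incEdges.1 he).2
  have := hL.mapsTo hd
  simpa [Finset.mem_Icc] using this

lemma card_labelSet (hL : IsEdgeLabeling n t) (v : Fin n) :
    (labelSet n t v).card = n - 1 := by
  rw [labelSet_eq, Finset.card_image_of_injOn, card_incEdges]
  intro a ha b hb hab
  exact hL.injOn (mem_incEdges.1 ha).2 (mem_incEdges.1 hb).2 hab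

/-- the unique edge containing two distinct vertices carries the unique common label -/
lemma common_label (hL : IsEdgeLabeling n t) {u v : Fin n} (huv : u ≠ v)
    {k m : ℕ} (hku : k ∈ labelSet n t u) (hkv : k ∈ labelSet n t v)
    (hmu : m ∈ labelSet n t u) (hmv : m ∈ labelSet n t v) : k = m := by
  have key : ∀ j : ℕ, j ∈ labelSet n t u → j ∈ labelSet n t v → j = t s(u, v) := by
    intro j hju hjv
    rcases mem_labelSet.1 hju with ⟨e, he, rfl⟩
    rcases mem_labelSet.1 hjv with ⟨f, hf, hft⟩
    have he' := mem_incEdges.1 he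
    have hf' := mem_incEdges.1 hf
    have hef : e = f := hL.injOn he'.2 hf'.2 hft.symm
    have : e = s(u, v) := by
      rw [← Sym2.mem_and_mem_iff huv]
      exact ⟨he'.1, hef ▸ hf'.1⟩
    rw [this]
  rw [key k hku hkv, key m hmu hmv]

lemma card_inter_labelSet (hL : IsEdgeLabeling n t) {u v : Fin n} (huv : u ≠ v) :
    (labelSet n t u ∩ labelSet n t v).card ≤ 1 := by
  refine Finset.card_le_one.2 ?_
  intro a ha b hb
  simp only [Finset.mem_inter] at ha hb
  exact common_label hL huv ha.1 ha.2 hb.1 hb.2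

/-- each label belongs to at most two vertices -/
lemma card_owners (hL : IsEdgeLabeling n t) (k : ℕ) :
    (Finset.univ.filter (fun u : Fin n => k ∈ labelSet n t u)).card ≤ 2 := by
  by_contra h
  push_neg at h
  obtain ⟨a, ha, b, hb, c, hc, hab, hac, hbc⟩ := Finset.two_lt_card.1 h
  simp only [Finset.mem_filter] at ha hb hc
  -- all three vertices lie on the same edge
  have key : ∀ u : Fin n, k ∈ labelSet n t u → ∀ w : Fin n, k ∈ labelSet n t w →
      ∀ e ∈ incEdges n u, t e = k → w ∈ e := by
    intro u hu w hw e he hek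
    rcases mem_labelSet.1 hw with ⟨f, hf, hft⟩
    have hef : e = f := hL.injOn (mem_incEdges.1 he).2 (mem_incEdges.1 hf).2 (by rw [hek, hft])
    rw [hef]; exact (mem_incEdges.1 hf).1
  rcases mem_labelSet.1 ha.2 with ⟨e, he, hek⟩
  have hae : a ∈ e := (mem_incEdges.1 he).1
  have hbe : b ∈ e := key a ha.2 b hb.2 e he hek
  have hce : c ∈ e := key a ha.2 c hc.2 e he hek
  induction e using Sym2.ind with
  | _ x y =>
    rcases Sym2.mem_iff.1 hae with rfl | rfl <;>
    rcases Sym2.mem_iff.1 hbe with h1 | h1 <;>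
    rcases Sym2.mem_iff.1 hce with h2 | h2 <;>
    simp_all

end Aux
section Aux2
open Swap Finset
open scoped Classical

variable {n : ℕ} {t : Sym2 (Fin n) → ℕ}

/-- set of "bottom elements of q-pairs" inside the label set of w -/
noncomputable def Bq (n : ℕ) (t : Sym2 (Fin n) → ℕ) (q : ℕ) (w : Fin n) : Finset ℕ :=
  (labelSet n t w).filter (fun k => k + q ∈ labelSet n t w)

noncomputable def Aq (n : ℕ) (t : Sym2 (Fin n) → ℕ) (q : ℕ) (u v : Fin n) : Finset ℕ :=
  (labelSet n t u).filter (fun k => k + 2 * q ∈ labelSet n t v)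

lemma sum_Bq (hL : IsEdgeLabeling n t) {q : ℕ} (hq : 1 ≤ q) :
    ∑ w : Fin n, (Bq n t q w).card ≤ eps n := by
  have hrw : ∀ w : Fin n, (Bq n t q w).card
      = ((Finset.Icc 1 (eps n)).filter
          (fun k => k ∈ labelSet n t w ∧ k + q ∈ labelSet n t w)).card := by
    intro w
    congr 1
    ext k
    simp only [Bq, Finset.mem_filter, Finset.mem_Icc]
    constructor
    · intro ⟨h1, h2⟩
      have := labelSet_subset hL w h1
      simp only [Finset.mem_Icc] at this
      exact ⟨this, h1, h2⟩
    · tauto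
  calc ∑ w : Fin n, (Bq n t q w).card
      = ∑ w : Fin n, ∑ k ∈ Finset.Icc 1 (eps n),
          (if k ∈ labelSet n t w ∧ k + q ∈ labelSet n t w then 1 else 0) := by
        simp only [hrw, Finset.card_filter]
    _ = ∑ k ∈ Finset.Icc 1 (eps n), ∑ w : Fin n,
          (if k ∈ labelSet n t w ∧ k + q ∈ labelSet n t w then 1 else 0) :=
        Finset.sum_comm
    _ ≤ ∑ _k ∈ Finset.Icc 1 (eps n), 1 := by
        refine Finset.sum_le_sum ?_
        intro k _
        rw [← Finset.card_filter]
        refine Finset.card_le_one.2 ?_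
        intro a ha b hb
        simp only [Finset.mem_filter] at ha hb
        by_contra hab
        have := common_label hL hab ha.2.1 hb.2.1 ha.2.2 hb.2.2
        omega
    _ ≤ eps n := by simp [Nat.card_Icc]

lemma sum_Aq (hL : IsEdgeLabeling n t) (q : ℕ) :
    ∑ w : Fin n × Fin n, (Aq n t q w.1 w.2).card ≤ 4 * eps n := by
  have hrw : ∀ w : Fin n × Fin n, (Aq n t q w.1 w.2).card
      = ((Finset.Icc 1 (eps n)).filter
          (fun k => k ∈ labelSet n t w.1 ∧ k + 2 * q ∈ labelSet n t w.2)).card := by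
    intro w
    congr 1
    ext k
    simp only [Aq, Finset.mem_filter, Finset.mem_Icc]
    constructor
    · intro ⟨h1, h2⟩
      have := labelSet_subset hL w.1 h1
      simp only [Finset.mem_Icc] at this
      exact ⟨this, h1, h2⟩
    · tauto
  calc ∑ w : Fin n × Fin n, (Aq n t q w.1 w.2).card
      = ∑ w : Fin n × Fin n, ∑ k ∈ Finset.Icc 1 (eps n),
          (if k ∈ labelSet n t w.1 ∧ k + 2 * q ∈ labelSet n t w.2 then 1 else 0) := by
        simp only [hrw, Finset.card_filter]
    _ = ∑ k ∈ Finset.Icc 1 (eps n), ∑ w : Fin n × Fin n,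
          (if k ∈ labelSet n t w.1 ∧ k + 2 * q ∈ labelSet n t w.2 then 1 else 0) :=
        Finset.sum_comm
    _ ≤ ∑ _k ∈ Finset.Icc 1 (eps n), 4 := by
        refine Finset.sum_le_sum ?_
        intro k _
        rw [← Finset.card_filter]
        have hsub : (Finset.univ.filter
            (fun w : Fin n × Fin n => k ∈ labelSet n t w.1 ∧ k + 2 * q ∈ labelSet n t w.2))
            ⊆ (Finset.univ.filter (fun u : Fin n => k ∈ labelSet n t u)) ×ˢ
              (Finset.univ.filter (fun u : Fin n => k + 2 * q ∈ labelSet n t u)) := by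
          intro w hw
          simp only [Finset.mem_filter, Finset.mem_product, Finset.mem_univ, true_and] at *
          exact hw
        calc _ ≤ _ := Finset.card_le_card hsub
          _ ≤ 2 * 2 := by
              rw [Finset.card_product]
              exact Nat.mul_le_mul (card_owners hL k) (card_owners hL (k + 2 * q))
          _ ≤ 4 := by norm_num
    _ ≤ 4 * eps n := by simp [Nat.card_Icc, Nat.mul_comm]

/-- there is a pair of distinct vertices whose badness is at most n+2 -/
lemma exists_good_pair (hL : IsEdgeLabeling n t) {q : ℕ} (hq : 1 ≤ q) (hn : 2 ≤ n) :
    ∃ u v : Fin n, u ≠ v ∧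
      (Bq n t q u).card + (Bq n t q v).card + (Aq n t q u v).card ≤ n + 2 := by
  have heps : 2 * eps n = n * (n - 1) := by
    have : 2 ∣ n * (n - 1) := Nat.even_mul_pred_self n |>.two_dvd
    unfold eps
    omega
  have hsum : ∑ w ∈ Finset.univ.offDiag,
      ((Bq n t q w.1).card + (Bq n t q w.2).card + (Aq n t q (w.1) (w.2)).card)
      ≤ (n + 2) * (n * (n - 1)) := by
    have h1 : ∑ w ∈ Finset.univ.offDiag, (Bq n t q w.1).card
        ≤ ∑ w : Fin n × Fin n, (Bq n t q w.1).card :=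
      Finset.sum_le_sum_of_subset (Finset.subset_univ _)
    have h2 : ∑ w ∈ Finset.univ.offDiag, (Bq n t q w.2).card
        ≤ ∑ w : Fin n × Fin n, (Bq n t q w.2).card :=
      Finset.sum_le_sum_of_subset (Finset.subset_univ _)
    have h3 : ∑ w ∈ Finset.univ.offDiag, (Aq n t q w.1 w.2).card
        ≤ ∑ w : Fin n × Fin n, (Aq n t q w.1 w.2).card :=
      Finset.sum_le_sum_of_subset (Finset.subset_univ _)
    have e1 : ∑ w : Fin n × Fin n, (Bq n t q w.1).card = n * ∑ u : Fin n, (Bq n t q u).card := by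
      rw [← Finset.univ_product_univ, Finset.sum_product_right]
      simp [Finset.sum_const, Finset.card_univ, mul_comm]
    have e2 : ∑ w : Fin n × Fin n, (Bq n t q w.2).card = n * ∑ u : Fin n, (Bq n t q u).card := by
      rw [← Finset.univ_product_univ, Finset.sum_product]
      simp [Finset.sum_const, Finset.card_univ, mul_comm]
    have hb := sum_Bq hL hq
    have ha := sum_Aq hL q
    rw [Finset.sum_add_distrib, Finset.sum_add_distrib]
    nlinarith [h1, h2, h3, e1, e2]
  have hne : (Finset.univ.offDiag : Finset (Fin n × Fin n)).Nonempty := by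
    refine ⟨(⟨0, by omega⟩, ⟨1, by omega⟩), Finset.mem_offDiag.2
      ⟨Finset.mem_univ _, Finset.mem_univ _, ?_⟩⟩
    simp [Fin.ext_iff]
  have hcard : (Finset.univ.offDiag : Finset (Fin n × Fin n)).card = n * (n - 1) := by
    rw [Finset.offDiag_card]
    simp only [Finset.card_univ, Fintype.card_fin]
    cases n with
    | zero => simp
    | succ m => rw [Nat.succ_sub_one, Nat.mul_succ, Nat.add_sub_cancel]
  by_contra hcon
  push_neg at hcon
  have : ∀ w ∈ Finset.univ.offDiag (α := Fin n),
      (n + 2) + 1 ≤ (Bq n t q w.1).card + (Bq n t q w.2).card + (Aq n t q w.1 w.2).card := by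
    intro w hw
    have := hcon w.1 w.2 (Finset.mem_offDiag.1 hw).2.2
    omega
  have hlow : ((n + 2) + 1) * (n * (n - 1)) ≤ (n + 2) * (n * (n - 1)) := by
    calc ((n + 2) + 1) * (n * (n - 1)) = ∑ _w ∈ Finset.univ.offDiag (α := Fin n), ((n + 2) + 1) := by
          rw [Finset.sum_const, hcard]; ring
      _ ≤ ∑ w ∈ Finset.univ.offDiag,
          ((Bq n t q w.1).card + (Bq n t q w.2).card + (Aq n t q w.1 w.2).card) :=
          Finset.sum_le_sum this
      _ ≤ (n + 2) * (n * (n - 1)) := hsum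
  have hpos : 0 < n * (n - 1) := by
    have : 1 ≤ n - 1 := by omega
    exact Nat.mul_pos (by omega) this
  nlinarith [hlow, hpos]
section Aux3
open Swap Finset
open scoped Classical

variable {n : ℕ} {t : Sym2 (Fin n) → ℕ}

/-- the "drop set" for vertex v : bottoms of free slots below labels of v -/
noncomputable def Vv (n q : ℕ) (t : Sym2 (Fin n) → ℕ) (v : Fin n) : Finset ℕ :=
  ((labelSet n t v).filter (fun k => q < k ∧ k - q ∉ labelSet n t v)).image (· - q)

/-- the "boost set" for vertex u -/
noncomputable def Tu (n q : ℕ) (t : Sym2 (Fin n) → ℕ) (u v : Fin n) : Finset ℕ :=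
  (labelSet n t u).filter (fun k => k + q ≤ eps n ∧ k + q ∉ labelSet n t u ∧
    k + q ∉ Vv n q t v ∧ k ∉ (Vv n q t v).image (· + q))

noncomputable def MM (n q : ℕ) (t : Sym2 (Fin n) → ℕ) (u v : Fin n) : Finset ℕ :=
  Tu n q t u v ∪ Vv n q t v

noncomputable def sig (n q : ℕ) (t : Sym2 (Fin n) → ℕ) (u v : Fin n) (k : ℕ) : ℕ :=
  if k ∈ MM n q t u v then k + q
  else if k ∈ (MM n q t u v).image (· + q) then k - q else k

variable {q : ℕ} {u v : Fin n}

lemma mem_Vv_spec {m : ℕ} (hm : m ∈ Vv n q t v) :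
    1 ≤ m ∧ m ∉ labelSet n t v ∧ m + q ∈ labelSet n t v := by
  simp only [Vv, Finset.mem_image, Finset.mem_filter] at hm
  obtain ⟨k, ⟨hkS, hqk, hknot⟩, rfl⟩ := hm
  have h1 : k - q + q = k := by omega
  refine ⟨by omega, hknot, by rw [h1]; exact hkS⟩

lemma mem_Tu_spec {k : ℕ} (hk : k ∈ Tu n q t u v) :
    k ∈ labelSet n t u ∧ k + q ≤ eps n ∧ k + q ∉ labelSet n t u ∧
    k + q ∉ Vv n q t v ∧ k ∉ (Vv n q t v).image (· + q) := by
  have h := Finset.mem_filter.1 hk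
  exact ⟨h.1, h.2⟩

lemma no_adj {m : ℕ} (hm : m ∈ MM n q t u v) : m + q ∉ MM n q t u v := by
  intro hm'
  rcases Finset.mem_union.1 hm with h | h <;> rcases Finset.mem_union.1 hm' with h' | h'
  · exact (mem_Tu_spec h).2.2.1 (mem_Tu_spec h').1
  · exact (mem_Tu_spec h).2.2.2.1 h'
  · exact (mem_Tu_spec h').2.2.2.2 (Finset.mem_image.2 ⟨m, h, rfl⟩)
  · exact (mem_Vv_spec h').2.1 (mem_Vv_spec h).2.2

lemma not_mem_image_of_mem {k : ℕ} (hk : k ∈ MM n q t u v) :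
    k ∉ (MM n q t u v).image (· + q) := by
  intro h
  rcases Finset.mem_image.1 h with ⟨m, hm, rfl⟩
  exact no_adj hm hk

lemma sig_mem {k : ℕ} (hk : k ∈ MM n q t u v) : sig n q t u v k = k + q :=
  if_pos hk

lemma sig_img {k : ℕ} (hk : k ∈ (MM n q t u v).image (· + q)) :
    sig n q t u v k = k - q := by
  have h1 : k ∉ MM n q t u v := by
    intro h
    exact not_mem_image_of_mem h hk
  simp only [sig, if_neg h1, if_pos hk]

lemma sig_other {k : ℕ} (h1 : k ∉ MM n q t u v) (h2 : k ∉ (MM n q t u v).image (· + q)) :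
    sig n q t u v k = k := by
  simp only [sig, if_neg h1, if_neg h2]

lemma sig_invol (k : ℕ) : sig n q t u v (sig n q t u v k) = k := by
  by_cases h1 : k ∈ MM n q t u v
  · rw [sig_mem h1, sig_img (Finset.mem_image.2 ⟨k, h1, rfl⟩)]
    omega
  · by_cases h2 : k ∈ (MM n q t u v).image (· + q)
    · rcases Finset.mem_image.1 h2 with ⟨m, hm, rfl⟩
      rw [sig_img h2]
      simp only [Nat.add_sub_cancel]
      rw [sig_mem hm]
    · rw [sig_other h1 h2, sig_other h1 h2]

lemma sig_injective : Function.Injective (sig n q t u v) :=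
  Function.LeftInverse.injective (g := sig n q t u v) (fun k => sig_invol k)

lemma mem_MM_le {k : ℕ} (hL : IsEdgeLabeling n t) (hk : k ∈ MM n q t u v) :
    1 ≤ k ∧ k + q ≤ eps n := by
  rcases Finset.mem_union.1 hk with h | h
  · have h1 := mem_Tu_spec h
    have := labelSet_subset hL u h1.1
    simp only [Finset.mem_Icc] at this
    exact ⟨this.1, h1.2.1⟩
  · have h1 := mem_Vv_spec h
    have := labelSet_subset hL v h1.2.2
    simp only [Finset.mem_Icc] at this
    exact ⟨h1.1, this.2⟩

lemma sig_mapsTo (hL : IsEdgeLabeling n t) {k : ℕ} (hk : k ∈ Set.Icc 1 (eps n)) :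
    sig n q t u v k ∈ Set.Icc 1 (eps n) := by
  simp only [Set.mem_Icc] at hk ⊢
  by_cases h1 : k ∈ MM n q t u v
  · rw [sig_mem h1]
    have := mem_MM_le hL h1
    omega
  · by_cases h2 : k ∈ (MM n q t u v).image (· + q)
    · rcases Finset.mem_image.1 h2 with ⟨m, hm, rfl⟩
      rw [sig_img h2]
      have := mem_MM_le hL hm
      simp only [Nat.add_sub_cancel]
      omega
    · rw [sig_other h1 h2]; exact hk

lemma sig_bijOn (hL : IsEdgeLabeling n t) :
    Set.BijOn (sig n q t u v) (Set.Icc 1 (eps n)) (Set.Icc 1 (eps n)) := by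
  refine ⟨fun k hk => sig_mapsTo hL hk, fun a _ b _ hab => sig_injective hab, ?_⟩
  intro y hy
  exact ⟨sig n q t u v y, sig_mapsTo hL hy, sig_invol y⟩

lemma sig_close (hL : IsEdgeLabeling n t) (k : ℕ) :
    |(sig n q t u v k : ℤ) - (k : ℤ)| ≤ (q : ℤ) := by
  by_cases h1 : k ∈ MM n q t u v
  · rw [sig_mem h1]
    simp
  · by_cases h2 : k ∈ (MM n q t u v).image (· + q)
    · rcases Finset.mem_image.1 h2 with ⟨m, hm, rfl⟩
      rw [sig_img h2]
      simp only [Nat.add_sub_cancel]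
      push_cast
      rw [abs_sub_comm]
      simp
    · rw [sig_other h1 h2]
      simp

/-- the swapped labeling -/
noncomputable def tSwap (n q : ℕ) (t : Sym2 (Fin n) → ℕ) (u v : Fin n)
    (e : Sym2 (Fin n)) : ℕ :=
  if e.IsDiag then t e else sig n q t u v (t e)

lemma tSwap_eq {e : Sym2 (Fin n)} (he : ¬ e.IsDiag) :
    tSwap n q t u v e = sig n q t u v (t e) := if_neg he

lemma tSwap_labeling (hL : IsEdgeLabeling n t) :
    IsEdgeLabeling n (tSwap n q t u v) := by
  have hcomp : Set.BijOn (sig n q t u v ∘ t) {e : Sym2 (Fin n) | ¬ e.IsDiag}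
      (Set.Icc 1 (eps n)) := (sig_bijOn hL).comp hL
  refine hcomp.congr ?_
  intro e he
  simp only [Set.mem_setOf_eq] at he
  simp [tSwap_eq he, Function.comp]

lemma tSwap_pswap (hL : IsEdgeLabeling n t) : IsPSwap n q t (tSwap n q t u v) := by
  refine ⟨tSwap_labeling hL, ?_⟩
  intro e he
  rw [tSwap_eq he]
  exact sig_close hL (t e)

end Aux3
section Aux4
open Swap Finset
open scoped Classical

variable {n : ℕ} {t : Sym2 (Fin n) → ℕ} {q : ℕ} {u v : Fin n}

lemma labelSum_tSwap (hL : IsEdgeLabeling n t) (w : Fin n) :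
    labelSum n (tSwap n q t u v) w - labelSum n t w
      = ∑ k ∈ labelSet n t w, ((sig n q t u v k : ℤ) - (k : ℤ)) := by
  unfold labelSum
  rw [← Finset.sum_sub_distrib]
  have h1 : ∀ e ∈ incEdges n w,
      (tSwap n q t u v e : ℤ) - (t e : ℤ)
        = (fun k => (sig n q t u v k : ℤ) - (k : ℤ)) (t e) := by
    intro e he
    simp only [tSwap_eq (mem_incEdges.1 he).2]
  rw [Finset.sum_congr rfl h1, labelSet_eq,
    Finset.sum_image (fun a ha b hb hab =>
      hL.injOn (mem_incEdges.1 ha).2 (mem_incEdges.1 hb).2 hab)]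

lemma delta_eq (hL : IsEdgeLabeling n t) (hq : 1 ≤ q) (w : Fin n) :
    ∑ k ∈ labelSet n t w, ((sig n q t u v k : ℤ) - (k : ℤ))
      = (q : ℤ) * ((labelSet n t w ∩ MM n q t u v).card : ℤ)
        - (q : ℤ) * ((labelSet n t w ∩ (MM n q t u v).image (· + q)).card : ℤ) := by
  have hpt : ∀ k ∈ labelSet n t w, (sig n q t u v k : ℤ) - (k : ℤ)
      = (if k ∈ MM n q t u v then (q : ℤ) else 0)
        + (if k ∈ (MM n q t u v).image (· + q) then (-q : ℤ) else 0) := by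
    intro k _
    by_cases h1 : k ∈ MM n q t u v
    · rw [sig_mem h1, if_pos h1, if_neg (not_mem_image_of_mem h1)]
      push_cast; ring
    · by_cases h2 : k ∈ (MM n q t u v).image (· + q)
      · rw [sig_img h2, if_neg h1, if_pos h2]
        rcases Finset.mem_image.1 h2 with ⟨m, hm, rfl⟩
        simp only [Nat.add_sub_cancel]
        push_cast; ring
      · rw [sig_other h1 h2, if_neg h1, if_neg h2]
        ring
  rw [Finset.sum_congr rfl hpt, Finset.sum_add_distrib]
  rw [Finset.sum_ite_mem, Finset.sum_ite_mem]
  simp only [Finset.sum_const, nsmul_eq_mul]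
  push_cast
  ring

-- the four cardinality comparisons
lemma card_Su_MM_ge : (Tu n q t u v).card ≤ ((labelSet n t u ∩ MM n q t u v)).card := by
  refine Finset.card_le_card ?_
  intro k hk
  refine Finset.mem_inter.2 ⟨(mem_Tu_spec hk).1, Finset.mem_union.2 (Or.inl hk)⟩

lemma card_Su_img_le (hL : IsEdgeLabeling n t) (huv : u ≠ v) :
    ((labelSet n t u ∩ (MM n q t u v).image (· + q))).card ≤ 1 := by
  have hsub : labelSet n t u ∩ (MM n q t u v).image (· + q)
      ⊆ labelSet n t u ∩ labelSet n t v := by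
    intro k hk
    rcases Finset.mem_inter.1 hk with ⟨hku, hki⟩
    rcases Finset.mem_image.1 hki with ⟨m, hm, rfl⟩
    rcases Finset.mem_union.1 hm with h | h
    · exact absurd hku (mem_Tu_spec h).2.2.1
    · exact Finset.mem_inter.2 ⟨hku, (mem_Vv_spec h).2.2⟩
  exact le_trans (Finset.card_le_card hsub) (card_inter_labelSet hL huv)

lemma card_Sv_MM_le (hL : IsEdgeLabeling n t) (huv : u ≠ v) :
    ((labelSet n t v ∩ MM n q t u v)).card ≤ 1 := by
  have hsub : labelSet n t v ∩ MM n q t u v ⊆ labelSet n t u ∩ labelSet n t v := by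
    intro k hk
    rcases Finset.mem_inter.1 hk with ⟨hkv, hki⟩
    rcases Finset.mem_union.1 hki with h | h
    · exact Finset.mem_inter.2 ⟨(mem_Tu_spec h).1, hkv⟩
    · exact absurd hkv (mem_Vv_spec h).2.1
  exact le_trans (Finset.card_le_card hsub) (card_inter_labelSet hL huv)

lemma card_Sv_img_ge : (Vv n q t v).card ≤
    ((labelSet n t v ∩ (MM n q t u v).image (· + q))).card := by
  have h1 : (Vv n q t v).image (· + q) ⊆ labelSet n t v ∩ (MM n q t u v).image (· + q) := by
    intro k hk
    rcases Finset.mem_image.1 hk with ⟨m, hm, rfl⟩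
    refine Finset.mem_inter.2 ⟨(mem_Vv_spec hm).2.2, ?_⟩
    exact Finset.mem_image.2 ⟨m, Finset.mem_union.2 (Or.inr hm), rfl⟩
  calc (Vv n q t v).card = ((Vv n q t v).image (· + q)).card :=
        (Finset.card_image_of_injective _ (add_left_injective q)).symm
    _ ≤ _ := Finset.card_le_card h1

-- lower bounds on the cards of Tu and Vv
lemma card_Vv_ge (hL : IsEdgeLabeling n t) :
    n ≤ (Vv n q t v).card + q + (Bq n t q v).card + 1 + (2 - n) := by
  classical
  set S := labelSet n t v with hS
  have hcover : S ⊆ (S.filter (fun k => ¬ q < k)) ∪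
      (S.filter (fun k => q < k ∧ k - q ∈ S)) ∪ (S.filter (fun k => q < k ∧ k - q ∉ S)) := by
    intro k hk
    simp only [Finset.mem_union, Finset.mem_filter]
    by_cases h1 : q < k
    · by_cases h2 : k - q ∈ S
      · exact Or.inl (Or.inr ⟨hk, h1, h2⟩)
      · exact Or.inr ⟨hk, h1, h2⟩
    · exact Or.inl (Or.inl ⟨hk, h1⟩)
  have hc1 : (S.filter (fun k => ¬ q < k)).card ≤ q := by
    have : S.filter (fun k => ¬ q < k) ⊆ Finset.Icc 1 q := by
      intro k hk
      rcases Finset.mem_filter.1 hk with ⟨hkS, hkq⟩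
      have := labelSet_subset hL v hkS
      simp only [Finset.mem_Icc] at this ⊢
      omega
    calc _ ≤ (Finset.Icc 1 q).card := Finset.card_le_card this
      _ = q := by simp [Nat.card_Icc]
  have hc2 : (S.filter (fun k => q < k ∧ k - q ∈ S)).card ≤ (Bq n t q v).card := by
    refine Finset.card_le_card_of_injOn (fun k => k - q) ?_ ?_
    · intro k hk
      rcases Finset.mem_filter.1 hk with ⟨hkS, hq, hmem⟩
      simp only [Bq, Finset.mem_filter]
      refine Finset.mem_filter.2 ⟨hmem, ?_⟩
      have : k - q + q = k := by omega
      rw [this]; exact hkS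
    · intro a ha b hb hab
      rcases Finset.mem_filter.1 ha with ⟨_, ha2, _⟩
      rcases Finset.mem_filter.1 hb with ⟨_, hb2, _⟩
      have hab' : a - q = b - q := hab
      omega
  have hc3 : (S.filter (fun k => q < k ∧ k - q ∉ S)).card = (Vv n q t v).card := by
    rw [Vv, Finset.card_image_of_injOn]
    intro a ha b hb hab
    rcases Finset.mem_filter.1 ha with ⟨_, ha2, _⟩
    rcases Finset.mem_filter.1 hb with ⟨_, hb2, _⟩
    have hab' : a - q = b - q := hab
    omega
  have hcard : S.card = n - 1 := card_labelSet hL v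
  have := Finset.card_le_card hcover
  have hu := Finset.card_union_le ((S.filter (fun k => ¬ q < k)) ∪
      (S.filter (fun k => q < k ∧ k - q ∈ S))) (S.filter (fun k => q < k ∧ k - q ∉ S))
  have hu2 := Finset.card_union_le (S.filter (fun k => ¬ q < k))
      (S.filter (fun k => q < k ∧ k - q ∈ S))
  omega

set_option maxHeartbeats 1000000 in
lemma card_Tu_ge (hL : IsEdgeLabeling n t) (huv : u ≠ v) :
    n ≤ (Tu n q t u v).card + q + (Bq n t q u).card + (Aq n t q u v).card + 2 + (2 - n) := by
  classical
  set S := labelSet n t u with hS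
  set Z0 := S.filter (fun k => eps n < k + q) with hZ0
  set Z1 := S.filter (fun k => k + q ∈ S) with hZ1
  set Z2 := S.filter (fun k => k + q ∈ Vv n q t v) with hZ2
  set Z3 := S.filter (fun k => k ∈ (Vv n q t v).image (· + q)) with hZ3
  have hcover : S ⊆ Z0 ∪ Z1 ∪ Z2 ∪ Z3 ∪ Tu n q t u v := by
    intro k hk
    simp only [Finset.mem_union]
    by_cases h0 : eps n < k + q
    · exact Or.inl (Or.inl (Or.inl (Or.inl (Finset.mem_filter.2 ⟨hk, h0⟩))))
    by_cases h1 : k + q ∈ S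
    · exact Or.inl (Or.inl (Or.inl (Or.inr (Finset.mem_filter.2 ⟨hk, h1⟩))))
    by_cases h2 : k + q ∈ Vv n q t v
    · exact Or.inl (Or.inl (Or.inr (Finset.mem_filter.2 ⟨hk, h2⟩)))
    by_cases h3 : k ∈ (Vv n q t v).image (· + q)
    · exact Or.inl (Or.inr (Finset.mem_filter.2 ⟨hk, h3⟩))
    exact Or.inr (Finset.mem_filter.2 ⟨hk, by omega, h1, h2, h3⟩)
  have hc0 : Z0.card ≤ q := by
    have hsub : Z0 ⊆ Finset.Ioc (eps n - q) (eps n) := by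
      intro k hk
      rcases Finset.mem_filter.1 hk with ⟨hkS, hkq⟩
      have := labelSet_subset hL u hkS
      simp only [Finset.mem_Icc] at this
      simp only [Finset.mem_Ioc]
      omega
    calc _ ≤ (Finset.Ioc (eps n - q) (eps n)).card := Finset.card_le_card hsub
      _ ≤ q := by rw [Nat.card_Ioc]; omega
  have hc1 : Z1 = Bq n t q u := by
    ext k
    simp [hZ1, Bq, hS]
  have hc2 : Z2.card ≤ (Aq n t q u v).card := by
    refine Finset.card_le_card ?_
    intro k hk
    rcases Finset.mem_filter.1 hk with ⟨hkS, hkV⟩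
    simp only [Aq, Finset.mem_filter]
    refine ⟨hkS, ?_⟩
    have h := (mem_Vv_spec hkV).2.2
    have heq : k + q + q = k + 2 * q := by ring
    rwa [heq] at h
  have hc3 : Z3.card ≤ 1 := by
    have hsub : Z3 ⊆ labelSet n t u ∩ labelSet n t v := by
      intro k hk
      rcases Finset.mem_filter.1 hk with ⟨hkS, hkI⟩
      rcases Finset.mem_image.1 hkI with ⟨m, hm, rfl⟩
      exact Finset.mem_inter.2 ⟨hkS, (mem_Vv_spec hm).2.2⟩
    exact le_trans (Finset.card_le_card hsub) (card_inter_labelSet hL huv)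
  have hcard : S.card = n - 1 := card_labelSet hL u
  have h := Finset.card_le_card hcover
  have h1 := Finset.card_union_le (Z0 ∪ Z1 ∪ Z2 ∪ Z3) (Tu n q t u v)
  have h2 := Finset.card_union_le (Z0 ∪ Z1 ∪ Z2) Z3
  have h3 := Finset.card_union_le (Z0 ∪ Z1) Z2
  have h4 := Finset.card_union_le Z0 Z1
  have hc1' : Z1.card = (Bq n t q u).card := by rw [hc1]
  omega

end Aux4
section Aux5
open Swap Finset
open scoped Classical

variable {n : ℕ} {t : Sym2 (Fin n) → ℕ}

lemma labelSum_bounds {t' : Sym2 (Fin n) → ℕ} (hL' : IsEdgeLabeling n t') (w : Fin n) :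
    0 ≤ labelSum n t' w ∧ labelSum n t' w ≤ ((n - 1 : ℕ) : ℤ) * (eps n : ℤ) := by
  constructor
  · exact Finset.sum_nonneg (fun e _ => Int.natCast_nonneg _)
  · calc labelSum n t' w ≤ ∑ _e ∈ incEdges n w, (eps n : ℤ) := by
          refine Finset.sum_le_sum ?_
          intro e he
          have := hL'.mapsTo (mem_incEdges.1 he).2
          simp only [Set.mem_Icc] at this
          exact_mod_cast this.2
      _ = ((n - 1 : ℕ) : ℤ) * (eps n : ℤ) := by
          rw [Finset.sum_const, card_incEdges]
          simp [mul_comm]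

lemma robustSet_bddAbove (q : ℕ) (t : Sym2 (Fin n) → ℕ) :
    BddAbove {d : ℕ | ∃ t' : Sym2 (Fin n) → ℕ, IsPSwap n q t t' ∧
      ∃ u v : Fin n, u ≠ v ∧ (d : ℤ) = |labelSum n t' u - labelSum n t' v|} := by
  refine ⟨2 * (n - 1) * eps n, ?_⟩
  rintro d ⟨t', hps, u, v, huv, hd⟩
  have hu := labelSum_bounds hps.1 u
  have hv := labelSum_bounds hps.1 v
  have : (d : ℤ) ≤ ((2 * (n - 1) * eps n : ℕ) : ℤ) := by
    rw [hd]
    rw [abs_le]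
    push_cast
    constructor <;> nlinarith [hu.1, hu.2, hv.1, hv.2]
  exact_mod_cast this

lemma shiftSum_bound {t' : Sym2 (Fin n) → ℕ} {q : ℕ} (hps : IsPSwap n q t t') (w : Fin n) :
    |labelSum n t' w - labelSum n t w| ≤ (q : ℤ) * ((n - 1 : ℕ) : ℤ) := by
  unfold labelSum
  rw [← Finset.sum_sub_distrib]
  calc |∑ e ∈ incEdges n w, ((t' e : ℤ) - (t e : ℤ))|
      ≤ ∑ e ∈ incEdges n w, |(t' e : ℤ) - (t e : ℤ)| := Finset.abs_sum_le_sum_abs _ _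
    _ ≤ ∑ _e ∈ incEdges n w, (q : ℤ) := by
        refine Finset.sum_le_sum ?_
        intro e he
        exact hps.2 e (mem_incEdges.1 he).2
    _ = (q : ℤ) * ((n - 1 : ℕ) : ℤ) := by
        rw [Finset.sum_const, card_incEdges]
        simp [mul_comm]

theorem upper_bound {αv : ℕ} (ht : AlmostSupermagic n αv t) (q : ℕ) :
    robustness n q t ≤ 2 * q * (n - 1) + αv := by
  unfold robustness
  set SS := {d : ℕ | ∃ t' : Sym2 (Fin n) → ℕ, IsPSwap n q t t' ∧
      ∃ u v : Fin n, u ≠ v ∧ (d : ℤ) = |labelSum n t' u - labelSum n t' v|} with hSS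
  rcases Set.eq_empty_or_nonempty SS with h | h
  · rw [h, csSup_empty]
    exact Nat.zero_le _
  · refine csSup_le h ?_
    rintro d ⟨t', hps, u, v, huv, hd⟩
    have h1 := shiftSum_bound hps u
    have h2 := shiftSum_bound hps v
    have h3 := ht.2 u v
    have : (d : ℤ) ≤ ((2 * q * (n - 1) + αv : ℕ) : ℤ) := by
      rw [hd]
      push_cast
      have e1 : labelSum n t' u - labelSum n t' v
          = (labelSum n t' u - labelSum n t u) + (labelSum n t u - labelSum n t v)
            + (labelSum n t v - labelSum n t' v) := by ring
      rw [e1]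
      calc |_| ≤ |labelSum n t' u - labelSum n t u| + |labelSum n t u - labelSum n t v|
            + |labelSum n t v - labelSum n t' v| := by
              exact (abs_add_three _ _ _)
        _ ≤ (q : ℤ) * ((n - 1 : ℕ) : ℤ) + αv + (q : ℤ) * ((n - 1 : ℕ) : ℤ) := by
              rw [abs_sub_comm (labelSum n t v) (labelSum n t' v)]
              exact add_le_add (add_le_add h1 h3) h2
        _ = 2 * (q : ℤ) * ((n - 1 : ℕ) : ℤ) + αv := by ring
    exact_mod_cast this

theorem key_lower {αv : ℕ} (hn : 2 ≤ n) {q : ℕ} (hq : 1 ≤ q)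
    (ht : AlmostSupermagic n αv t) :
    (q : ℤ) * ((n : ℤ) - 2 * q - 7) - αv ≤ (robustness n q t : ℤ) := by
  have hL := ht.1
  obtain ⟨u, v, huv, hbad⟩ := exists_good_pair hL hq hn
  set t' := tSwap n q t u v with ht'
  have hps : IsPSwap n q t t' := tSwap_pswap hL
  have hDu := labelSum_tSwap (q := q) (u := u) (v := v) hL u
  have hDv := labelSum_tSwap (q := q) (u := u) (v := v) hL v
  have hEu := delta_eq (q := q) (u := u) (v := v) hL hq u
  have hEv := delta_eq (q := q) (u := u) (v := v) hL hq v
  set a1 := (labelSet n t u ∩ MM n q t u v).card with ha1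
  set a2 := (labelSet n t u ∩ (MM n q t u v).image (· + q)).card with ha2
  set a3 := (labelSet n t v ∩ MM n q t u v).card with ha3
  set a4 := (labelSet n t v ∩ (MM n q t u v).image (· + q)).card with ha4
  have k1 : (Tu n q t u v).card ≤ a1 := card_Su_MM_ge
  have k2 : a2 ≤ 1 := card_Su_img_le hL huv
  have k3 : a3 ≤ 1 := card_Sv_MM_le hL huv
  have k4 : (Vv n q t v).card ≤ a4 := card_Sv_img_ge
  have k5 := card_Tu_ge (q := q) (v := v) hL huv
  have k6 := card_Vv_ge (q := q) (v := v) hL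
  -- the key integer inequality
  have hq' : (0 : ℤ) ≤ (q : ℤ) := Int.natCast_nonneg _
  have hsum : (n : ℤ) - 2 * q - 5 ≤ ((Tu n q t u v).card : ℤ) + ((Vv n q t v).card : ℤ) := by
    have hF : n + n ≤ (Tu n q t u v).card + (Vv n q t v).card + 2 * q
        + ((Bq n t q u).card + (Bq n t q v).card + (Aq n t q u v).card) + 3 := by omega
    have hF' : ((n : ℤ) + n) ≤ ((Tu n q t u v).card : ℤ) + ((Vv n q t v).card : ℤ)
        + 2 * q + ((Bq n t q u).card + (Bq n t q v).card + (Aq n t q u v).card : ℕ) + 3 := by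
      exact_mod_cast hF
    have hbad' : (((Bq n t q u).card + (Bq n t q v).card + (Aq n t q u v).card : ℕ) : ℤ)
        ≤ (n : ℤ) + 2 := by exact_mod_cast hbad
    linarith
  have hX : (q : ℤ) * ((n : ℤ) - 2 * q - 7) - αv
      ≤ labelSum n t' u - labelSum n t' v := by
    have hα : -(αv : ℤ) ≤ labelSum n t u - labelSum n t v := neg_le_of_abs_le (ht.2 u v)
    have hp1 : (q : ℤ) * ((Tu n q t u v).card : ℤ) ≤ (q : ℤ) * (a1 : ℤ) :=
      mul_le_mul_of_nonneg_left (by exact_mod_cast k1) hq'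
    have hp2 : (q : ℤ) * (a2 : ℤ) ≤ (q : ℤ) * 1 :=
      mul_le_mul_of_nonneg_left (by exact_mod_cast k2) hq'
    have hp3 : (q : ℤ) * (a3 : ℤ) ≤ (q : ℤ) * 1 :=
      mul_le_mul_of_nonneg_left (by exact_mod_cast k3) hq'
    have hp4 : (q : ℤ) * ((Vv n q t v).card : ℤ) ≤ (q : ℤ) * (a4 : ℤ) :=
      mul_le_mul_of_nonneg_left (by exact_mod_cast k4) hq'
    have hp5 : (q : ℤ) * ((n : ℤ) - 2 * q - 5)
        ≤ (q : ℤ) * (((Tu n q t u v).card : ℤ) + ((Vv n q t v).card : ℤ)) :=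
      mul_le_mul_of_nonneg_left hsum hq'
    have e1 : labelSum n t' u - labelSum n t' v
        = (labelSum n t u - labelSum n t v)
          + (labelSum n t' u - labelSum n t u) - (labelSum n t' v - labelSum n t v) := by
      ring
    rw [e1, hDu, hDv, hEu, hEv]
    nlinarith [hp1, hp2, hp3, hp4, hp5, hα]
  set X := labelSum n t' u - labelSum n t' v with hXdef
  have hmem : X.natAbs ∈ {d : ℕ | ∃ t'' : Sym2 (Fin n) → ℕ, IsPSwap n q t t'' ∧
      ∃ u' v' : Fin n, u' ≠ v' ∧ (d : ℤ) = |labelSum n t'' u' - labelSum n t'' v'|} := by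
    exact ⟨t', hps, u, v, huv, by rw [Int.abs_eq_natAbs]⟩
  have hle : X.natAbs ≤ robustness n q t :=
    le_csSup (robustSet_bddAbove q t) hmem
  have hle' : (X.natAbs : ℤ) ≤ (robustness n q t : ℤ) := by exact_mod_cast hle
  calc (q : ℤ) * ((n : ℤ) - 2 * q - 7) - αv ≤ X := hX
    _ ≤ |X| := le_abs_self X
    _ = (X.natAbs : ℤ) := by rw [Int.abs_eq_natAbs]
    _ ≤ _ := hle'

end Aux5
section Final
open Swap Finset Filter
open scoped Classical Topology

theorem stmt5' (p α : ℕ → ℕ) (hadm : Swap.Admissible p)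
    (hα : ∃ C : ℝ, ∀ n : ℕ, (α n : ℝ) ≤ C * n)
    (t : ∀ n : ℕ, Sym2 (Fin n) → ℕ)
    (ht : ∀ n : ℕ, 2 ≤ n → Swap.AlmostSupermagic n (α n) (t n)) :
    1 ≤ Filter.liminf
        (fun n : ℕ => (Swap.robustness n (p n) (t n) : ℝ) / (p n * n)) Filter.atTop ∧
    Filter.limsup
        (fun n : ℕ => (Swap.robustness n (p n) (t n) : ℝ) / (p n * n)) Filter.atTop ≤ 2 := by
  obtain ⟨hp0, hpinf⟩ := hadm
  obtain ⟨C, hC⟩ := hα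
  have hC0 : 0 ≤ C := by
    have h1 := hC 1
    have h2 : (0 : ℝ) ≤ ((α 1 : ℕ) : ℝ) := Nat.cast_nonneg _
    simp only [Nat.cast_one, mul_one] at h1
    linarith
  set f : ℕ → ℝ := fun n => (Swap.robustness n (p n) (t n) : ℝ) / (p n * n) with hf
  have hfnonneg : ∀ n, 0 ≤ f n := by
    intro n
    apply div_nonneg (Nat.cast_nonneg _)
    positivity
  have hev : ∀ᶠ n in atTop, 2 ≤ n ∧ 1 ≤ p n :=
    (eventually_ge_atTop 2).and (hpinf.eventually_ge_atTop 1)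
  -- components
  have h3 : Tendsto (fun n : ℕ => C / (p n : ℝ)) atTop (𝓝 0) := by
    have : Tendsto (fun n : ℕ => (p n : ℝ)) atTop atTop :=
      tendsto_natCast_atTop_atTop.comp hpinf
    exact Tendsto.div_atTop tendsto_const_nhds this
  set g : ℕ → ℝ := fun n => 1 - (2 * ((p n : ℝ) / n) + 7 / n) - C / (p n) with hg
  set h : ℕ → ℝ := fun n => 2 + C / (p n : ℝ) with hh
  have hgl : Tendsto g atTop (𝓝 1) := by
    have h1 : Tendsto (fun n : ℕ => 2 * ((p n : ℝ) / n) + 7 / n) atTop (𝓝 0) := by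
      have := (hp0.const_mul 2).add (tendsto_const_div_atTop_nhds_zero_nat 7)
      simpa using this
    have := (tendsto_const_nhds (x := (1 : ℝ)) (f := atTop)).sub h1 |>.sub h3
    simpa using this
  have hhl : Tendsto h atTop (𝓝 2) := by
    have := (tendsto_const_nhds (x := (2 : ℝ)) (f := atTop)).add h3
    simpa using this
  -- eventual bounds
  have hub : ∀ᶠ n in atTop, f n ≤ h n := by
    filter_upwards [hev] with n hn
    obtain ⟨hn2, hq1⟩ := hn
    have hkey := upper_bound (ht n hn2) (p n)
    have hpn : (0 : ℝ) < (p n : ℝ) * n := by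
      have : (1 : ℝ) ≤ (p n : ℝ) := by exact_mod_cast hq1
      have h2 : (2 : ℝ) ≤ (n : ℝ) := by exact_mod_cast hn2
      nlinarith
    have hR : (Swap.robustness n (p n) (t n) : ℝ) ≤ 2 * (p n : ℝ) * n + C * n := by
      have h1 : (Swap.robustness n (p n) (t n) : ℝ)
          ≤ 2 * (p n : ℝ) * ((n - 1 : ℕ) : ℝ) + ((α n : ℕ) : ℝ) := by
        exact_mod_cast hkey
      have h2 : ((n - 1 : ℕ) : ℝ) ≤ (n : ℝ) := by
        exact_mod_cast Nat.sub_le n 1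
      have h3 := hC n
      nlinarith [(Nat.cast_nonneg (p n) : (0:ℝ) ≤ (p n : ℝ))]
    calc f n ≤ (2 * (p n : ℝ) * n + C * n) / ((p n : ℝ) * n) := by
          exact div_le_div_of_nonneg_right hR hpn.le |>.trans_eq rfl
      _ = h n := by
          have hp' : (p n : ℝ) ≠ 0 := by positivity
          have hn' : (n : ℝ) ≠ 0 := by
            have : (2 : ℝ) ≤ (n : ℝ) := by exact_mod_cast hn2
            linarith
          simp only [hh]
          field_simp
  have hlb : ∀ᶠ n in atTop, g n ≤ f n := by
    filter_upwards [hev] with n hn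
    obtain ⟨hn2, hq1⟩ := hn
    have hkey := key_lower hn2 hq1 (ht n hn2)
    have hp' : (0 : ℝ) < (p n : ℝ) := by exact_mod_cast hq1
    have hn' : (0 : ℝ) < (n : ℝ) := by
      have : (2 : ℝ) ≤ (n : ℝ) := by exact_mod_cast hn2
      linarith
    have hpn : (0 : ℝ) < (p n : ℝ) * n := by positivity
    have hR : (p n : ℝ) * ((n : ℝ) - 2 * p n - 7) - C * n
        ≤ (Swap.robustness n (p n) (t n) : ℝ) := by
      have h1 : (p n : ℝ) * ((n : ℝ) - 2 * p n - 7) - ((α n : ℕ) : ℝ)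
          ≤ (Swap.robustness n (p n) (t n) : ℝ) := by
        exact_mod_cast hkey
      have h2 := hC n
      linarith
    calc g n = ((p n : ℝ) * ((n : ℝ) - 2 * p n - 7) - C * n) / ((p n : ℝ) * n) := by
          simp only [hg]
          field_simp
          ring
      _ ≤ f n := div_le_div_of_nonneg_right hR hpn.le |>.trans_eq rfl
  constructor
  · have h1 : Filter.liminf g atTop = 1 := hgl.liminf_eq
    have h2 : Filter.liminf g atTop ≤ Filter.liminf f atTop := by
      refine Filter.liminf_le_liminf hlb ?_ ?_
      · exact hgl.isBoundedUnder_ge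
      · exact (hhl.isBoundedUnder_le.mono_le hub).isCoboundedUnder_ge
    rw [h1] at h2
    exact h2
  · have h1 : Filter.limsup h atTop = 2 := hhl.limsup_eq
    have h2 : Filter.limsup f atTop ≤ Filter.limsup h atTop := by
      refine Filter.limsup_le_limsup hub ?_ ?_
      · exact (Filter.isBoundedUnder_of ⟨0, fun n => hfnonneg n⟩ :
          Filter.IsBoundedUnder (· ≥ ·) Filter.atTop f).isCoboundedUnder_le
      · exact hhl.isBoundedUnder_le
    rw [h1] at h2
    exact h2

end Final

theorem stmt5 (p α : ℕ → ℕ) (hadm : Swap.Admissible p)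
    (hα : ∃ C : ℝ, ∀ n : ℕ, (α n : ℝ) ≤ C * n)
    (t : ∀ n : ℕ, Sym2 (Fin n) → ℕ)
    (ht : ∀ n : ℕ, 2 ≤ n → Swap.AlmostSupermagic n (α n) (t n)) :
    1 ≤ Filter.liminf
        (fun n : ℕ => (Swap.robustness n (p n) (t n) : ℝ) / (p n * n)) Filter.atTop ∧
    Filter.limsup
        (fun n : ℕ => (Swap.robustness n (p n) (t n) : ℝ) / (p n * n)) Filter.atTop ≤ 2 := by
  exact stmt5' p α hadm hα t ht
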